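/- arXiv:1412.1701 — 4 statements merged into one kernel-verified Lean document; each statement's English description precedes it below -/
import Mathlib

section
/- Let τ be any test such that, for some δ ∈ (0,1), ∫ τ dP ≤ ∫ τ* dP + δ and ∫ τ dQ ≥ ∫ τ* dQ − δ. Then for every ε > 0, |ν_c|{ |τ − τ*| > ε } ≤ (1 + c) δ / ε. -/
/-!
On `{q > c p}` the test `τ*` equals `1 ≥ τ`, and on `{q < c p}` it equals `0 ≤ τ`, so
`|τ - τ*| |q - c p| = (τ* - τ)(q - c p)` pointwise. Integrating against `μ` gives
`∫ |τ - τ*| d|ν_c| = ∫ (τ* - τ) dQ - c ∫ (τ* - τ) dP ≤ (1 + c) δ`, and Markov's inequality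
for `|ν_c|` yields the bound.
-/

open MeasureTheory Filter Set

theorem abs_sub_mul_abs_eq_of_neymanPearson {a t s : ℝ} (ht : t ∈ Icc 0 1)
    (hs_one : 0 < a → s = 1) (hs_zero : a < 0 → s = 0) :
    |s - t| * |a| = (s - t) * a := by
  rcases lt_trichotomy a 0 with ha | rfl | ha
  · rw [hs_zero ha, abs_of_neg ha, abs_of_nonpos (by linarith [ht.1])]
    ring
  · simp
  · rw [hs_one ha, abs_of_pos ha, abs_of_nonneg (by linarith [ht.2])]

namespace MeasureTheory

variable {α : Type*} [MeasurableSpace α] {μ : Measure α}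

section Density

variable {f : α → ℝ}

theorem integral_withDensity_ofReal (hf : Measurable f) (hf0 : ∀ x, 0 ≤ f x) (g : α → ℝ) :
    ∫ x, g x ∂μ.withDensity (fun x => ENNReal.ofReal (f x)) = ∫ x, f x * g x ∂μ := by
  rw [show (fun x => ENNReal.ofReal (f x)) = fun x => ((f x).toNNReal : ENNReal) from rfl,
    integral_withDensity_eq_integral_smul hf.real_toNNReal]
  simp only [NNReal.smul_def, Real.coe_toNNReal _ (hf0 _), smul_eq_mul]

theorem Integrable.mul_of_withDensity_ofReal (hf : Measurable f) (hf0 : ∀ x, 0 ≤ f x)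
    {g : α → ℝ} (hg : Integrable g (μ.withDensity fun x => ENNReal.ofReal (f x))) :
    Integrable (fun x => f x * g x) μ := by
  rw [show (fun x => ENNReal.ofReal (f x)) = fun x => ((f x).toNNReal : ENNReal) from rfl,
    integrable_withDensity_iff_integrable_smul hf.real_toNNReal] at hg
  simpa only [NNReal.smul_def, Real.coe_toNNReal _ (hf0 _), smul_eq_mul] using hg

variable {p q g : α → ℝ} (hp : Measurable p) (hp0 : ∀ x, 0 ≤ p x)
  (hq : Measurable q) (hq0 : ∀ x, 0 ≤ q x) (c : ℝ)
  (hgP : Integrable g (μ.withDensity fun x => ENNReal.ofReal (p x)))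
  (hgQ : Integrable g (μ.withDensity fun x => ENNReal.ofReal (q x)))
include hp hp0 hq hq0 hgP hgQ

theorem Integrable.mul_sub_const_mul_of_withDensity_ofReal :
    Integrable (fun x => g x * (q x - c * p x)) μ := by
  refine ((hgQ.mul_of_withDensity_ofReal hq hq0).sub
    ((hgP.mul_of_withDensity_ofReal hp hp0).const_mul c)).congr (ae_of_all _ fun x => ?_)
  simp only [Pi.sub_apply]
  ring

theorem integral_mul_sub_const_mul_eq_integral_withDensity_ofReal :
    ∫ x, g x * (q x - c * p x) ∂μ =
      ∫ x, g x ∂μ.withDensity (fun x => ENNReal.ofReal (q x))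
        - c * ∫ x, g x ∂μ.withDensity (fun x => ENNReal.ofReal (p x)) := by
  have hqg := hgQ.mul_of_withDensity_ofReal hq hq0
  have hpg := (hgP.mul_of_withDensity_ofReal hp hp0).const_mul c
  rw [integral_withDensity_ofReal hq hq0, integral_withDensity_ofReal hp hp0,
    ← integral_const_mul, ← integral_sub hqg hpg]
  congr 1 with x
  ring

end Density

theorem lintegral_ofReal_abs_withDensity_ofReal_abs {d u : α → ℝ} (hd : Measurable d)
    (hu : Measurable u) (hint : Integrable (fun x => u x * d x) μ)
    (hud : ∀ x, |u x| * |d x| = u x * d x) :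
    ∫⁻ x, ENNReal.ofReal |u x| ∂μ.withDensity (fun x => ENNReal.ofReal |d x|) =
      ENNReal.ofReal (∫ x, u x * d x ∂μ) := by
  rw [lintegral_withDensity_eq_lintegral_mul _ hd.abs.ennreal_ofReal hu.abs.ennreal_ofReal,
    ofReal_integral_eq_lintegral_ofReal hint
      (ae_of_all _ fun x => show 0 ≤ u x * d x from hud x ▸ by positivity)]
  refine lintegral_congr fun x => ?_
  rw [Pi.mul_apply, ← ENNReal.ofReal_mul (abs_nonneg _), mul_comm, hud]

theorem measure_lt_abs_le_ofReal_div {h : α → ℝ} (hh : AEMeasurable h μ) {ε B : ℝ}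
    (hε : 0 < ε) (hB : ∫⁻ x, ENNReal.ofReal |h x| ∂μ ≤ ENNReal.ofReal B) :
    μ {x | ε < |h x|} ≤ ENNReal.ofReal (B / ε) := calc
  μ {x | ε < |h x|} ≤ μ {x | ENNReal.ofReal ε ≤ ENNReal.ofReal |h x|} :=
    measure_mono fun x hx => ENNReal.ofReal_le_ofReal (le_of_lt hx)
  _ ≤ (∫⁻ x, ENNReal.ofReal |h x| ∂μ) / ENNReal.ofReal ε :=
    meas_ge_le_lintegral_div hh.abs.ennreal_ofReal (by simpa using hε) ENNReal.ofReal_ne_top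
  _ ≤ ENNReal.ofReal (B / ε) := by
    rw [ENNReal.ofReal_div_of_pos hε]
    gcongr

end MeasureTheory

theorem stmt_13_general {Y : Type*} [MeasurableSpace Y] (μ : Measure Y)
    (p q : Y → ℝ) (hp_meas : Measurable p) (hq_meas : Measurable q)
    (hp0 : ∀ x, 0 ≤ p x) (hq0 : ∀ x, 0 ≤ q x)
    (P Q : Measure Y)
    (hP : P = μ.withDensity fun x => ENNReal.ofReal (p x))
    (hQ : Q = μ.withDensity fun x => ENNReal.ofReal (q x))
    (hPprob : IsProbabilityMeasure P) (hQprob : IsProbabilityMeasure Q)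
    (c : ℝ) (hc : 0 ≤ c)
    (τ τs : Y → ℝ) (hτ_meas : Measurable τ) (hτs_meas : Measurable τs)
    (hτ_range : ∀ x, τ x ∈ Set.Icc (0 : ℝ) 1)
    (hτs_range : ∀ x, τs x ∈ Set.Icc (0 : ℝ) 1)
    (hτs_one : ∀ x, c * p x < q x → τs x = 1)
    (hτs_zero : ∀ x, q x < c * p x → τs x = 0)
    (δ : ℝ)
    (hsize : ∫ x, τ x ∂P ≤ ∫ x, τs x ∂P + δ)
    (hpower : ∫ x, τs x ∂Q - δ ≤ ∫ x, τ x ∂Q) :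
    ∀ ε : ℝ, 0 < ε →
      (μ.withDensity fun x => ENNReal.ofReal |q x - c * p x|)
          {x | ε < |τ x - τs x|} ≤ ENNReal.ofReal ((1 + c) * δ / ε) := by
  intro ε hε
  simp only [abs_sub_comm (τ _)]
  have hτ_int {ν : Measure Y} [IsFiniteMeasure ν] : Integrable τ ν :=
    .of_mem_Icc 0 1 hτ_meas.aemeasurable (ae_of_all _ hτ_range)
  have hτs_int {ν : Measure Y} [IsFiniteMeasure ν] : Integrable τs ν :=
    .of_mem_Icc 0 1 hτs_meas.aemeasurable (ae_of_all _ hτs_range)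
  have hgap_int {ν : Measure Y} [IsFiniteMeasure ν] : Integrable (fun x => τs x - τ x) ν :=
    hτs_int.sub hτ_int
  have hgap : ∫ x, τs x - τ x ∂Q - c * ∫ x, τs x - τ x ∂P ≤ (1 + c) * δ := by
    rw [integral_sub hτs_int hτ_int, integral_sub hτs_int hτ_int]
    nlinarith
  have hgap_meas : Measurable fun x => τs x - τ x := hτs_meas.sub hτ_meas
  have hdens_meas : Measurable fun x => q x - c * p x := hq_meas.sub (hp_meas.const_mul c)
  subst hP hQ
  refine measure_lt_abs_le_ofReal_div hgap_meas.aemeasurable hε ?_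
  rw [lintegral_ofReal_abs_withDensity_ofReal_abs hdens_meas hgap_meas
      (hgap_int.mul_sub_const_mul_of_withDensity_ofReal hp_meas hp0 hq_meas hq0 c hgap_int),
    integral_mul_sub_const_mul_eq_integral_withDensity_ofReal hp_meas hp0 hq_meas hq0 c
      hgap_int hgap_int]
  · exact ENNReal.ofReal_le_ofReal hgap
  · exact fun x => abs_sub_mul_abs_eq_of_neymanPearson (hτ_range x)
      (fun h => hτs_one x (sub_pos.1 h)) (fun h => hτs_zero x (sub_neg.1 h))

/-- approximate uniqueness of Neyman–Pearson tests.  If a test `τ` has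
almost the same size and power as the Neyman–Pearson test `τ*` with critical value `c`,
then `τ` is close to `τ*` in the total variation measure `|ν_c|` of `dν_c = (q - c·p)dμ`. -/
theorem stmt_13 {Y : Type*} [MeasurableSpace Y] (μ : Measure Y) [SigmaFinite μ]
    (p q : Y → ℝ) (hp_meas : Measurable p) (hq_meas : Measurable q)
    (hp0 : ∀ x, 0 ≤ p x) (hq0 : ∀ x, 0 ≤ q x)
    (P Q : Measure Y)
    (hP : P = μ.withDensity fun x => ENNReal.ofReal (p x))
    (hQ : Q = μ.withDensity fun x => ENNReal.ofReal (q x))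
    (hPprob : IsProbabilityMeasure P) (hQprob : IsProbabilityMeasure Q)
    (c : ℝ) (hc : 0 ≤ c)
    (τ τs : Y → ℝ) (hτ_meas : Measurable τ) (hτs_meas : Measurable τs)
    (hτ_range : ∀ x, τ x ∈ Set.Icc (0 : ℝ) 1)
    (hτs_range : ∀ x, τs x ∈ Set.Icc (0 : ℝ) 1)
    (hτs_one : ∀ x, c * p x < q x → τs x = 1)
    (hτs_zero : ∀ x, q x < c * p x → τs x = 0)
    (δ : ℝ) (hδ : δ ∈ Set.Ioo (0 : ℝ) 1)
    (hsize : ∫ x, τ x ∂P ≤ ∫ x, τs x ∂P + δ)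
    (hpower : ∫ x, τs x ∂Q - δ ≤ ∫ x, τ x ∂Q) :
    ∀ ε : ℝ, 0 < ε →
      (μ.withDensity fun x => ENNReal.ofReal |q x - c * p x|)
          {x | ε < |τ x - τs x|} ≤ ENNReal.ofReal ((1 + c) * δ / ε) :=
  stmt_13_general μ p q hp_meas hq_meas hp0 hq0 P Q hP hQ hPprob hQprob c hc τ τs hτ_meas hτs_meas
    hτ_range hτs_range hτs_one hτs_zero δ hsize hpower
end

section
/- κ̄ ≠ κ̃ if and only if there exists g ∈ C with ⟨κ, g⟩ < ⟨κ̃, g⟩. -/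
open scoped RealInnerProductSpace

/-!
The residual `κ - κ̄` of the orthogonal projection is orthogonal to `L`, and it is the only
residual `κ - x` with `x ∈ L` that is; since `κ̃ ∈ C ⊆ L`, we get `κ̄ = κ̃` exactly when
`κ - κ̃ ⊥ L`, i.e. when `κ - κ̃ ⊥ C`. The variational inequality of the cone projection
(tested against `g` and against `2κ̃`) gives `⟪κ - κ̃, g⟫ ≤ 0` on `C`, so `κ - κ̃ ⊥ C` fails
exactly when the inequality is strict for some `g ∈ C`.
-/

namespace Submodule

variable {𝕜 E : Type*} [RCLike 𝕜] [NormedAddCommGroup E] [InnerProductSpace 𝕜 E]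

theorem mem_orthogonal_span_iff {s : Set E} {v : E} :
    v ∈ (span 𝕜 s)ᗮ ↔ ∀ u ∈ s, inner 𝕜 u v = 0 := by
  refine ⟨fun h u hu => inner_right_of_mem_orthogonal (subset_span hu) h, fun h u hu => ?_⟩
  induction hu using span_induction with
  | mem x hx => exact h x hx
  | zero => exact inner_zero_left v
  | add x y _ _ hx hy => rw [inner_add_left, hx, hy, add_zero]
  | smul a x _ hx => rw [inner_smul_left, hx, mul_zero]

theorem eq_of_sub_mem_orthogonal {K : Submodule 𝕜 E} {u x y : E} (hx : x ∈ K) (hy : y ∈ K)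
    (hux : u - x ∈ Kᗮ) (huy : u - y ∈ Kᗮ) : x = y := by
  have hmem : x - y ∈ K ⊓ Kᗮ :=
    ⟨K.sub_mem hx hy, by simpa using Kᗮ.sub_mem huy hux⟩
  rw [K.inf_orthogonal_eq_bot, mem_bot] at hmem
  exact sub_eq_zero.mp hmem

end Submodule

namespace IsMinOn

theorem norm_sub_eq_iInf {E : Type*} [SeminormedAddCommGroup E] {K : Set E} {u v : E}
    (hv : v ∈ K) (hmin : IsMinOn (fun w => ‖u - w‖) K v) :
    ‖u - v‖ = ⨅ w : K, ‖u - w‖ :=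
  have : Nonempty K := ⟨⟨v, hv⟩⟩
  le_antisymm (le_ciInf fun w => hmin w.2)
    (ciInf_le ⟨0, Set.forall_mem_range.2 fun _ => norm_nonneg _⟩ (⟨v, hv⟩ : K))

variable {H : Type*} [NormedAddCommGroup H] [InnerProductSpace ℝ H] {u v : H}

theorem sub_mem_orthogonal {K : Submodule ℝ H} (hv : v ∈ K)
    (hmin : IsMinOn (fun w => ‖u - w‖) K v) : u - v ∈ Kᗮ :=
  (K.mem_orthogonal' _).2 <|
    (K.norm_eq_iInf_iff_real_inner_eq_zero hv).1 (hmin.norm_sub_eq_iInf hv)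

theorem inner_sub_nonpos_of_cone {C : Set H} (hconv : Convex ℝ C)
    (hcone : ∀ x ∈ C, ∀ r : ℝ, 0 ≤ r → r • x ∈ C) (hv : v ∈ C)
    (hmin : IsMinOn (fun w => ‖u - w‖) C v) : ∀ w ∈ C, ⟪u - v, w⟫ ≤ 0 := by
  have hvar := (norm_eq_iInf_iff_real_inner_le_zero hconv hv).1 (hmin.norm_sub_eq_iInf hv)
  have hv_nonpos : ⟪u - v, v⟫ ≤ 0 := by
    simpa [two_smul] using hvar _ (hcone v hv 2 zero_le_two)
  intro w hw
  have hw_var := hvar w hw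
  rw [inner_sub_right] at hw_var
  linarith

end IsMinOn

theorem stmt_15_general {H : Type*} [NormedAddCommGroup H] [InnerProductSpace ℝ H]
    (κ : H) (C : Set H)
    (hC_convex : Convex ℝ C) (hC_cone : ∀ x ∈ C, ∀ r : ℝ, 0 ≤ r → r • x ∈ C)
    (κt : H) (hκt_mem : κt ∈ C) (hκt_min : ∀ g ∈ C, ‖κ - κt‖ ≤ ‖κ - g‖)
    (κb : H) (hκb_mem : κb ∈ (Submodule.span ℝ C).topologicalClosure)
    (hκb_min : ∀ g ∈ (Submodule.span ℝ C).topologicalClosure, ‖κ - κb‖ ≤ ‖κ - g‖) :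
    κb ≠ κt ↔ ∃ g ∈ C, ⟪κ, g⟫ < ⟪κt, g⟫ := by
  set L := (Submodule.span ℝ C).topologicalClosure
  have hCL : C ⊆ L := fun _ hx =>
    Submodule.le_topologicalClosure _ (Submodule.subset_span hx)
  have hb : κ - κb ∈ Lᗮ := IsMinOn.sub_mem_orthogonal hκb_mem (isMinOn_iff.2 hκb_min)
  have ht : ∀ g ∈ C, ⟪κ - κt, g⟫ ≤ 0 :=
    IsMinOn.inner_sub_nonpos_of_cone hC_convex hC_cone hκt_mem (isMinOn_iff.2 hκt_min)
  constructor
  · intro hne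
    by_contra! hle
    refine hne (Submodule.eq_of_sub_mem_orthogonal hκb_mem (hCL hκt_mem) hb ?_)
    rw [Submodule.orthogonal_closure, Submodule.mem_orthogonal_span_iff]
    intro g hg
    have hg_nonpos := ht g hg
    rw [inner_sub_left] at hg_nonpos
    rw [real_inner_comm, inner_sub_left]
    linarith [hle g hg]
  · rintro ⟨g, hg, hlt⟩ rfl
    have hg_orth := Submodule.inner_left_of_mem_orthogonal (hCL hg) hb
    rw [inner_sub_left] at hg_orth
    linarith

/-- the metric projection `κ̃` of `κ` on a nonempty closed convex cone `C`
differs from the orthogonal projection `κ̄` of `κ` on the closed linear span of `C` iff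
there is some `g ∈ C` with `⟨κ,g⟩ < ⟨κ̃,g⟩`. -/
theorem stmt_15 {H : Type*} [NormedAddCommGroup H] [InnerProductSpace ℝ H]
    (κ : H) (C : Set H) (hC_ne : C.Nonempty) (hC_closed : IsClosed C)
    (hC_convex : Convex ℝ C) (hC_cone : ∀ x ∈ C, ∀ r : ℝ, 0 ≤ r → r • x ∈ C)
    (κt : H) (hκt_mem : κt ∈ C) (hκt_min : ∀ g ∈ C, ‖κ - κt‖ ≤ ‖κ - g‖)
    (κb : H) (hκb_mem : κb ∈ (Submodule.span ℝ C).topologicalClosure)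
    (hκb_min : ∀ g ∈ (Submodule.span ℝ C).topologicalClosure, ‖κ - κb‖ ≤ ‖κ - g‖) :
    κb ≠ κt ↔ ∃ g ∈ C, ⟪κ, g⟫ < ⟪κt, g⟫ :=
  stmt_15_general κ C hC_convex hC_cone κt hκt_mem hκt_min κb hκb_mem hκb_min
end

section
/- For every a ∈ (0,∞), the metric projection of κ onto the closed convex cone { γ₁ g₁ + γ₂ g₂ : γ₁, γ₂ ≥ 0 } in L²(P) (the unique element of the cone closest to κ in L²(P)-norm) equals b₁ g₁ = 2φ(0) g₁; in particular its squared norm equals 4φ(0)² = 2/π. -/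
open MeasureTheory Filter Set

noncomputable section

/-- The standard normal distribution function Φ. -/
def Phi (x : ℝ) : ℝ := (ProbabilityTheory.gaussianReal 0 1 (Set.Iic x)).toReal

variable {X : Type*}

/-- The inner product of `L²(P)`. -/
def ip [MeasurableSpace X] (P : Measure X) (f g : X → ℝ) : ℝ := ∫ x, f x * g x ∂P

/-- The norm of `L²(P)`. -/
def nrm [MeasurableSpace X] (P : Measure X) (f : X → ℝ) : ℝ :=
  Real.sqrt (∫ x, f x ^ 2 ∂P)

/-- The `n`-fold product `Qⁿ` of a measure `Q`. -/
def prodn [MeasurableSpace X] (Q : Measure X) (n : ℕ) : Measure (Fin n → X) :=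
  Measure.pi fun _ => Q

/-- Membership in the `L²(P)`-closure of a set of functions. -/
def InL2Closure [MeasurableSpace X] (P : Measure X) (G : Set (X → ℝ)) (f : X → ℝ) : Prop :=
  ∀ ε > 0, ∃ g ∈ G, ∫ x, (g x - f x) ^ 2 ∂P < ε

/-- `f` is the projection of `κ` onto the `L²(P)`-closure of `G`: it belongs to the
closure and minimizes the `L²(P)`-distance to `κ` among all elements of the closure. -/
def IsL2Projection [MeasurableSpace X] (P : Measure X) (G : Set (X → ℝ))
    (κ f : X → ℝ) : Prop :=
  InL2Closure P G f ∧
    ∀ h : X → ℝ, InL2Closure P G h →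
      ∫ x, (κ x - f x) ^ 2 ∂P ≤ ∫ x, (κ x - h x) ^ 2 ∂P

/-- `G` is a convex cone of functions. -/
def IsConvexCone (G : Set (X → ℝ)) : Prop :=
  ∀ g₁ ∈ G, ∀ g₂ ∈ G, ∀ γ₁ γ₂ : ℝ, 0 ≤ γ₁ → 0 ≤ γ₂ →
    (fun x => γ₁ * g₁ x + γ₂ * g₂ x) ∈ G

/-- `G` is a linear subspace of functions. -/
def IsLinearSubspaceSet (G : Set (X → ℝ)) : Prop :=
  ∀ g₁ ∈ G, ∀ g₂ ∈ G, ∀ γ₁ γ₂ : ℝ, (fun x => γ₁ * g₁ x + γ₂ * g₂ x) ∈ G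

/-- A statistical model: a tangent set `G` at `P`, for each tangent a differentiable
path, and a functional `T` differentiable at `P` along `G` with influence curve `κ`. -/
structure StatModel (X : Type*) [MeasurableSpace X] (P : Measure X) where
  /-- the tangent set -/
  G : Set (X → ℝ)
  tangent_memLp : ∀ g ∈ G, MemLp g 2 P
  tangent_mean : ∀ g ∈ G, ∫ x, g x ∂P = 0
  /-- `path g s = P_{g,s}` -/
  path : (X → ℝ) → ℝ → Measure X
  path_prob : ∀ g ∈ G, ∀ s : ℝ, 0 < s → IsProbabilityMeasure (path g s)
  /-- a common dominating σ-finite measure -/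
  μ : Measure X
  μ_sigmaFinite : SigmaFinite μ
  dom_base : P ≪ μ
  dom_path : ∀ g ∈ G, ∀ s : ℝ, 0 < s → path g s ≪ μ
  /-- `√(dP_{g,s}) = (1 + (s/2) g) √(dP) + o(s)` in `L²(μ)` as `s ↓ 0` -/
  sqrt_diff : ∀ g ∈ G,
    Tendsto (fun s : ℝ =>
        (∫ x, (Real.sqrt ((path g s).rnDeriv μ x).toReal -
            (1 + s / 2 * g x) * Real.sqrt (P.rnDeriv μ x).toReal) ^ 2 ∂μ) / s ^ 2)
      (nhdsWithin 0 (Set.Ioi 0)) (nhds 0)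
  /-- the functional -/
  T : Measure X → ℝ
  /-- the influence curve -/
  κ : X → ℝ
  κ_memLp : MemLp κ 2 P
  /-- `T(P_{g,s}) = T(P) + s⟨κ,g⟩ + o(s)` as `s ↓ 0` -/
  T_diff : ∀ g ∈ G,
    Tendsto (fun s : ℝ => (T (path g s) - T P - s * ip P κ g) / s)
      (nhdsWithin 0 (Set.Ioi 0)) (nhds 0)

/-- The local alternative `P_{n,t,g} = P_{g, t/√n}`. -/
def StatModel.loc [MeasurableSpace X] {P : Measure X} (M : StatModel X P)
    (n : ℕ) (t : ℝ) (g : X → ℝ) : Measure X :=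
  M.path g (t / Real.sqrt (n : ℝ))

/-- The one-sided test `1{ n^{-1/2} Σᵢ κ(xᵢ) > ‖κ‖·u }` on `Xⁿ`. -/
def tauTest [MeasurableSpace X] (P : Measure X) (κ : X → ℝ) (u : ℝ) (n : ℕ)
    (x : Fin n → X) : ℝ :=
  if nrm P κ * u < (∑ i, κ (x i)) / Real.sqrt (n : ℝ) then 1 else 0

/-- The standard normal density `φ`. -/
def stdφ (x : ℝ) : ℝ := (Real.sqrt (2 * Real.pi))⁻¹ * Real.exp (-x ^ 2 / 2)

/-- The standard normal distribution `N(0,1)`. -/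
def Pstd : Measure ℝ := ProbabilityTheory.gaussianReal 0 1

/-- `g₁ = sign`. -/
def g1 (x : ℝ) : ℝ := Real.sign x

/-- `μ_a = (2Φ(a) - 1)^{-1/2}`. -/
def μa (a : ℝ) : ℝ := (Real.sqrt (2 * Phi a - 1))⁻¹

/-- `g₂(x) = μ_a · sign(x) · 1{|x| ≤ a}`. -/
def g2 (a x : ℝ) : ℝ := if |x| ≤ a then μa a * Real.sign x else 0

def b1 : ℝ := 2 * stdφ 0

/-!
Write `r = κ - b₁ g₁`. Expanding `‖κ - h‖² = ‖r‖² + 2⟨r, b₁ g₁ - h⟩ + ‖b₁ g₁ - h‖²` shows that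
`b₁ g₁` is the projection onto the cone as soon as `⟨r, g₁⟩ = 0` and `⟨r, g₂⟩ ≤ 0`.
The integrands of both inner products are even, so these reduce to integrals over `x > 0`,
where `g₁ = 1` and `g₂ = μ_a 1{x ≤ a}`: `⟨r, g₁⟩ = 2∫₀^∞ (x - b₁) φ = 0` because
`∫₀^∞ x φ = φ(0)` and `∫₀^∞ φ = 1/2`, and `⟨r, g₂⟩ = 2 μ_a ∫₀^a (x - b₁) φ ≤ 0` because the
integrand changes sign only once, from `-` to `+` at `b₁`, and its integral over `(0, ∞)` vanishes.
-/

open Real ProbabilityTheory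

section ConeProjection

variable [MeasurableSpace X] {μ : Measure X}

theorem integral_sq_le_integral_add_sq {u v : X → ℝ} (hu : MemLp u 2 μ) (hv : MemLp v 2 μ)
    (huv : 0 ≤ ∫ x, u x * v x ∂μ) :
    ∫ x, u x ^ 2 ∂μ ≤ ∫ x, (u x + v x) ^ 2 ∂μ := by
  have hmul : Integrable (fun x => 2 * (u x * v x)) μ := (hu.integrable_mul hv).const_mul 2
  have hrest : Integrable (fun x => 2 * (u x * v x) + v x ^ 2) μ := hmul.add hv.integrable_sq
  have hexpand : ∫ x, (u x + v x) ^ 2 ∂μ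
      = ∫ x, u x ^ 2 ∂μ + (2 * ∫ x, u x * v x ∂μ + ∫ x, v x ^ 2 ∂μ) := by
    rw [← integral_const_mul, ← integral_add hmul hv.integrable_sq,
      ← integral_add hu.integrable_sq hrest]
    congr 1 with x
    ring
  have hv2 : 0 ≤ ∫ x, v x ^ 2 ∂μ := integral_nonneg fun x => sq_nonneg (v x)
  linarith

theorem integral_sq_sub_mul_le_of_inner {κ g₁ g₂ : X → ℝ} (hκ : MemLp κ 2 μ)
    (hg₁ : MemLp g₁ 2 μ) (hg₂ : MemLp g₂ 2 μ) {β : ℝ}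
    (h₁ : ∫ x, (κ x - β * g₁ x) * g₁ x ∂μ = 0) (h₂ : ∫ x, (κ x - β * g₁ x) * g₂ x ∂μ ≤ 0)
    (γ₁ : ℝ) {γ₂ : ℝ} (hγ₂ : 0 ≤ γ₂) :
    ∫ x, (κ x - β * g₁ x) ^ 2 ∂μ ≤ ∫ x, (κ x - (γ₁ * g₁ x + γ₂ * g₂ x)) ^ 2 ∂μ := by
  have hres : MemLp (fun x => κ x - β * g₁ x) 2 μ := hκ.sub (hg₁.const_mul β)
  have hinner : ∫ x, (κ x - β * g₁ x) * ((β - γ₁) * g₁ x - γ₂ * g₂ x) ∂μ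
      = (β - γ₁) * ∫ x, (κ x - β * g₁ x) * g₁ x ∂μ
        - γ₂ * ∫ x, (κ x - β * g₁ x) * g₂ x ∂μ := by
    have hint₁ : Integrable (fun x => (β - γ₁) * ((κ x - β * g₁ x) * g₁ x)) μ :=
      (hres.integrable_mul hg₁).const_mul _
    have hint₂ : Integrable (fun x => γ₂ * ((κ x - β * g₁ x) * g₂ x)) μ :=
      (hres.integrable_mul hg₂).const_mul _
    rw [← integral_const_mul, ← integral_const_mul, ← integral_sub hint₁ hint₂]
    congr 1 with x
    ring
  calc ∫ x, (κ x - β * g₁ x) ^ 2 ∂μ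
      ≤ ∫ x, ((κ x - β * g₁ x) + ((β - γ₁) * g₁ x - γ₂ * g₂ x)) ^ 2 ∂μ :=
        integral_sq_le_integral_add_sq hres ((hg₁.const_mul _).sub (hg₂.const_mul _))
          (by rw [hinner, h₁]; nlinarith)
    _ = ∫ x, (κ x - (γ₁ * g₁ x + γ₂ * g₂ x)) ^ 2 ∂μ := by
        congr 1 with x
        ring

end ConeProjection

theorem setIntegral_Ioc_nonpos_of_setIntegral_Ioi_eq_zero {μ : Measure ℝ} {f : ℝ → ℝ}
    {l c : ℝ} (hf : IntegrableOn f (Ioi l) μ) (h₀ : ∫ x in Ioi l, f x ∂μ = 0)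
    (hneg : ∀ x ∈ Ioc l c, f x ≤ 0) (hpos : ∀ x ∈ Ioi c, 0 ≤ f x) (a : ℝ) :
    ∫ x in Ioc l a, f x ∂μ ≤ 0 := by
  rcases le_or_gt a c with hac | hca
  · exact setIntegral_nonpos measurableSet_Ioc fun x hx => hneg x ⟨hx.1, hx.2.trans hac⟩
  rcases lt_or_ge a l with hal | hla
  · simp [Ioc_eq_empty_of_le hal.le]
  have hsplit : ∫ x in Ioc l a, f x ∂μ + ∫ x in Ioi a, f x ∂μ = ∫ x in Ioi l, f x ∂μ := by
    rw [← setIntegral_union (Ioc_disjoint_Ioi le_rfl) measurableSet_Ioi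
      (hf.mono_set Ioc_subset_Ioi_self) (hf.mono_set (Ioi_subset_Ioi hla)),
      Ioc_union_Ioi_eq_Ioi hla]
  have htail : 0 ≤ ∫ x in Ioi a, f x ∂μ :=
    setIntegral_nonneg measurableSet_Ioi fun x hx => hpos x (hca.trans hx)
  linarith

lemma stdφ_neg (x : ℝ) : stdφ (-x) = stdφ x := by simp [stdφ]

lemma stdφ_nonneg (x : ℝ) : 0 ≤ stdφ x := by unfold stdφ; positivity

lemma gaussianPDFReal_zero_one : gaussianPDFReal 0 1 = stdφ := by
  ext x
  simp [gaussianPDFReal, stdφ]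

lemma integrable_stdφ : Integrable stdφ :=
  gaussianPDFReal_zero_one ▸ integrable_gaussianPDFReal 0 1

lemma integral_Pstd (f : ℝ → ℝ) : ∫ x, f x ∂Pstd = ∫ x, stdφ x * f x := by
  simp [Pstd, integral_gaussianReal_eq_integral_smul, gaussianPDFReal_zero_one]

instance isProbabilityMeasure_Pstd : IsProbabilityMeasure Pstd := by
  unfold Pstd; infer_instance

theorem integral_Pstd_of_even {f : ℝ → ℝ} (hf : ∀ x, f (-x) = f x) :
    ∫ x, f x ∂Pstd = 2 * ∫ x in Ioi 0, stdφ x * f x := by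
  have habs : (fun x => stdφ x * f x) = fun x => stdφ |x| * f |x| := by
    ext x
    rcases abs_choice x with h | h <;> simp [h, stdφ_neg, hf]
  rw [integral_Pstd]
  exact (congrArg (fun g : ℝ → ℝ => ∫ x, g x) habs).trans
    (integral_comp_abs (f := fun x => stdφ x * f x))

lemma integral_Ioi_zero_stdφ : ∫ x in Ioi 0, stdφ x = 1 / 2 := by
  have h := integral_Pstd_of_even (f := fun _ => (1 : ℝ)) fun _ => rfl
  simp only [integral_const, probReal_univ, smul_eq_mul, mul_one] at h
  linarith

lemma hasDerivAt_stdφ (x : ℝ) : HasDerivAt stdφ (-(x * stdφ x)) x := by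
  have h : HasDerivAt (fun y : ℝ => -y ^ 2 / 2) (-x) x :=
    ((hasDerivAt_pow 2 x).neg.div_const 2).congr_deriv (by norm_num; ring)
  exact (h.exp.const_mul _).congr_deriv (by simp only [stdφ]; ring)

lemma tendsto_stdφ_atTop : Tendsto stdφ atTop (nhds 0) := by
  have h : Tendsto (fun x : ℝ => -x ^ 2 / 2) atTop atBot :=
    (tendsto_neg_atBot_iff.mpr (tendsto_pow_atTop two_ne_zero)).atBot_div_const two_pos
  have := (tendsto_exp_atBot.comp h).const_mul (Real.sqrt (2 * π))⁻¹
  rwa [mul_zero] at this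

lemma integrable_mul_stdφ : Integrable fun x => x * stdφ x := by
  refine ((integrable_mul_exp_neg_mul_sq one_half_pos).const_mul (Real.sqrt (2 * π))⁻¹).congr
    (.of_forall fun x => ?_)
  simp only [stdφ]
  ring_nf

lemma integral_Ioi_mul_stdφ (b : ℝ) : ∫ x in Ioi b, x * stdφ x = stdφ b := by
  have h := integral_Ioi_of_hasDerivAt_of_tendsto' (a := b)
    (fun x _ => ((hasDerivAt_stdφ x).neg).congr_deriv (neg_neg _))
    integrable_mul_stdφ.integrableOn tendsto_stdφ_atTop.neg
  simpa using h

lemma integrable_stdφ_mul_sub (c : ℝ) : Integrable fun x => stdφ x * (x - c) :=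
  (integrable_mul_stdφ.sub (integrable_stdφ.const_mul c)).congr (.of_forall fun x => by
    simp only [Pi.sub_apply]; ring)

lemma b1_nonneg : 0 ≤ b1 := by unfold b1 stdφ; positivity

lemma integral_Ioi_zero_stdφ_mul_sub_b1 : ∫ x in Ioi 0, stdφ x * (x - b1) = 0 := by
  have hsplit : ∫ x in Ioi 0, stdφ x * (x - b1)
      = (∫ x in Ioi 0, x * stdφ x) - b1 * ∫ x in Ioi 0, stdφ x := by
    rw [← integral_const_mul, ← integral_sub integrable_mul_stdφ.integrableOn
      (integrable_stdφ.const_mul b1).integrableOn]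
    congr 1 with x
    ring
  rw [hsplit, integral_Ioi_mul_stdφ, integral_Ioi_zero_stdφ, b1]
  ring

lemma setIntegral_Ioc_zero_stdφ_mul_sub_b1_nonpos (a : ℝ) :
    ∫ x in Ioc 0 a, stdφ x * (x - b1) ≤ 0 :=
  setIntegral_Ioc_nonpos_of_setIntegral_Ioi_eq_zero (integrable_stdφ_mul_sub b1).integrableOn
    integral_Ioi_zero_stdφ_mul_sub_b1
    (fun x hx => mul_nonpos_of_nonneg_of_nonpos (stdφ_nonneg x) (by linarith [hx.2]))
    (fun x hx => mul_nonneg (stdφ_nonneg x) (by linarith [hx.out])) a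

lemma g1_neg (x : ℝ) : g1 (-x) = -g1 x := Real.sign_neg

lemma g2_neg (a x : ℝ) : g2 a (-x) = -g2 a x := by
  by_cases h : |x| ≤ a <;> simp [g2, h, Real.sign_neg]

lemma g1_of_pos {x : ℝ} (hx : 0 < x) : g1 x = 1 := Real.sign_of_pos hx

lemma g2_of_pos (a : ℝ) {x : ℝ} (hx : 0 < x) : g2 a x = (Iic a).indicator (fun _ => μa a) x := by
  simp [g2, indicator, abs_of_pos hx, Real.sign_of_pos hx]

lemma measurable_g1 : Measurable g1 :=
  measurable_const.ite (measurableSet_lt measurable_id measurable_const)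
    (measurable_const.ite (measurableSet_lt measurable_const measurable_id) measurable_const)

lemma μa_nonneg (a : ℝ) : 0 ≤ μa a := by unfold μa; positivity

lemma abs_g1_le_one (x : ℝ) : |g1 x| ≤ 1 := by
  rcases Real.sign_apply_eq x with h | h | h <;> simp [g1, h]

lemma memLp_id_Pstd : MemLp (fun x => x) 2 Pstd :=
  memLp_id_gaussianReal' 2 ENNReal.ofNat_ne_top

lemma memLp_g1 : MemLp g1 2 Pstd :=
  .of_bound measurable_g1.aestronglyMeasurable 1 (.of_forall abs_g1_le_one)

lemma memLp_g2 (a : ℝ) : MemLp (g2 a) 2 Pstd := by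
  have hmeas : Measurable (g2 a) :=
    (measurable_g1.const_mul (μa a)).ite
      (measurableSet_le continuous_abs.measurable measurable_const) measurable_const
  refine .of_bound hmeas.aestronglyMeasurable (μa a) (.of_forall fun x => ?_)
  by_cases h : |x| ≤ a
  · simpa [g2, g1, h, abs_mul, abs_of_nonneg (μa_nonneg a)] using
      mul_le_mul_of_nonneg_left (abs_g1_le_one x) (μa_nonneg a)
  · simpa [g2, h] using μa_nonneg a

lemma integral_residual_mul_g1 : ∫ x, (x - b1 * g1 x) * g1 x ∂Pstd = 0 := by
  rw [integral_Pstd_of_even fun x => by rw [g1_neg]; ring,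
    setIntegral_congr_fun measurableSet_Ioi fun x hx => by rw [g1_of_pos hx, mul_one, mul_one],
    integral_Ioi_zero_stdφ_mul_sub_b1, mul_zero]

lemma integral_residual_mul_g2_nonpos (a : ℝ) : ∫ x, (x - b1 * g1 x) * g2 a x ∂Pstd ≤ 0 := by
  have hIoi : ∫ x in Ioi 0, stdφ x * ((x - b1 * g1 x) * g2 a x)
      = ∫ x in Ioi 0, (Iic a).indicator (fun x => μa a * (stdφ x * (x - b1))) x :=
    setIntegral_congr_fun measurableSet_Ioi fun x hx => by
      by_cases h : x ≤ a
      · simp [g1_of_pos hx, g2_of_pos a hx, h]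
        ring
      · simp [g2_of_pos a hx, h]
  rw [integral_Pstd_of_even fun x => by rw [g1_neg, g2_neg]; ring, hIoi,
    setIntegral_indicator measurableSet_Iic, Ioi_inter_Iic, integral_const_mul]
  exact mul_nonpos_of_nonneg_of_nonpos zero_le_two
    (mul_nonpos_of_nonneg_of_nonpos (μa_nonneg a) (setIntegral_Ioc_zero_stdφ_mul_sub_b1_nonpos a))

lemma integral_b1_mul_g1_sq : ∫ x, (b1 * g1 x) ^ 2 ∂Pstd = 4 * stdφ 0 ^ 2 := by
  rw [integral_Pstd_of_even fun x => by rw [g1_neg]; ring,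
    setIntegral_congr_fun measurableSet_Ioi fun x hx => by rw [g1_of_pos hx, mul_one, mul_comm],
    integral_const_mul, integral_Ioi_zero_stdφ, b1]
  ring

lemma four_mul_stdφ_zero_sq : 4 * stdφ 0 ^ 2 = 2 / π := by
  have hφ₀ : stdφ 0 = (Real.sqrt (2 * π))⁻¹ := by simp [stdφ]
  rw [hφ₀, inv_pow, sq_sqrt (by positivity)]
  field_simp
  ring

theorem stmt_18_general (a : ℝ) :
    (fun x => b1 * g1 x) ∈
      {f : ℝ → ℝ | ∃ γ₁ γ₂ : ℝ, 0 ≤ γ₁ ∧ 0 ≤ γ₂ ∧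
        f = fun x => γ₁ * g1 x + γ₂ * g2 a x} ∧
    (∀ f ∈ {f : ℝ → ℝ | ∃ γ₁ γ₂ : ℝ, 0 ≤ γ₁ ∧ 0 ≤ γ₂ ∧
        f = fun x => γ₁ * g1 x + γ₂ * g2 a x},
      ∫ x, (x - b1 * g1 x) ^ 2 ∂Pstd ≤ ∫ x, (x - f x) ^ 2 ∂Pstd) ∧
    ∫ x, (b1 * g1 x) ^ 2 ∂Pstd = 4 * stdφ 0 ^ 2 ∧
    ∫ x, (b1 * g1 x) ^ 2 ∂Pstd = 2 / Real.pi := by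
  refine ⟨⟨b1, 0, b1_nonneg, le_rfl, by simp⟩, ?_, integral_b1_mul_g1_sq,
    integral_b1_mul_g1_sq.trans four_mul_stdφ_zero_sq⟩
  rintro f ⟨γ₁, γ₂, -, hγ₂, rfl⟩
  exact integral_sq_sub_mul_le_of_inner memLp_id_Pstd memLp_g1 (memLp_g2 a)
    integral_residual_mul_g1 (integral_residual_mul_g2_nonpos a) γ₁ hγ₂

/-- in `L²(N(0,1))`, with `κ(x) = x`, the metric projection of `κ` onto
the closed convex cone `{γ₁g₁ + γ₂g₂ : γ₁, γ₂ ≥ 0}` is `b₁g₁ = 2φ(0)g₁`, whose squared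
norm is `4φ(0)² = 2/π`. -/
theorem stmt_18 (a : ℝ) (ha : 0 < a) :
    (fun x => b1 * g1 x) ∈
      {f : ℝ → ℝ | ∃ γ₁ γ₂ : ℝ, 0 ≤ γ₁ ∧ 0 ≤ γ₂ ∧
        f = fun x => γ₁ * g1 x + γ₂ * g2 a x} ∧
    (∀ f ∈ {f : ℝ → ℝ | ∃ γ₁ γ₂ : ℝ, 0 ≤ γ₁ ∧ 0 ≤ γ₂ ∧
        f = fun x => γ₁ * g1 x + γ₂ * g2 a x},
      ∫ x, (x - b1 * g1 x) ^ 2 ∂Pstd ≤ ∫ x, (x - f x) ^ 2 ∂Pstd) ∧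
    ∫ x, (b1 * g1 x) ^ 2 ∂Pstd = 4 * stdφ 0 ^ 2 ∧
    ∫ x, (b1 * g1 x) ^ 2 ∂Pstd = 2 / Real.pi :=
  stmt_18_general a
end
end

section
/- Let P be a probability measure on ℝ whose distribution function F is continuous and symmetric, i.e. F(−x) = 1 − F(x) for all x > 0. For ρ, q ∈ L²((0,1), Lebesgue) define κ_P(x) = sign(x)·ρ(2F(|x|) − 1) and g(x) = sign(x)·q(2F(|x|) − 1) (with sign(0) = 0). Then ∫ g dP = 0, ∫ κ_P·g dP = ∫₀¹ ρ(s) q(s) ds, and ∫ (κ_P − g)² dP = ∫₀¹ (ρ(s) − q(s))² ds; in particular ‖κ_P − g‖_{L²(P)} = ‖ρ − q‖_{L²(0,1)}. -/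
/-! For symmetric continuous `P`, the map `x ↦ 2 F(|x|) - 1` is the distribution function of `|X|`
evaluated at `|X|`, so by the probability integral transform it pushes `P` forward to the uniform
distribution on `(0, 1)`. Since `sign x ^ 2 = 1` off the `P`-null set `{0}`, the integrands `κ_P g`
and `(κ_P - g)²` are `ρ q` and `(ρ - q)²` composed with this uniform variable. Finally `g` is odd
and `P` is invariant under `x ↦ -x`, so `∫ g dP = 0`. -/

open MeasureTheory ProbabilityTheory Set Filter Topology

lemma Monotone.exists_preimage_Iic_eq_Iic {f : ℝ → ℝ} (hmono : Monotone f) (hf : Continuous f)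
    {t x₀ x₁ : ℝ} (h₀ : f x₀ ≤ t) (h₁ : t < f x₁) : ∃ a, f a = t ∧ f ⁻¹' Iic t = Iic a := by
  set S := f ⁻¹' Iic t
  have hS_bdd : BddAbove S := ⟨x₁, fun y hy => hmono.reflect_lt (hy.trans_lt h₁) |>.le⟩
  have haS : sSup S ∈ S := (isClosed_Iic.preimage hf).csSup_mem ⟨x₀, h₀⟩ hS_bdd
  obtain ⟨y, -, hy⟩ := intermediate_value_Icc (hmono.reflect_lt (h₀.trans_lt h₁)).le
    hf.continuousOn ⟨h₀, h₁.le⟩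
  refine ⟨sSup S, le_antisymm haS ?_, Subset.antisymm (fun x hx => le_csSup hS_bdd hx)
    fun x hx => (hmono hx).trans haS⟩
  exact hy ▸ hmono (le_csSup hS_bdd (show f y ≤ t from hy.le))

theorem MeasureTheory.integral_eq_zero_of_odd {G E : Type*} [AddGroup G] [MeasurableSpace G]
    [MeasurableNeg G] [NormedAddCommGroup E] [NormedSpace ℝ E] (μ : Measure G)
    [μ.IsNegInvariant] {f : G → E} (hf : f.Odd) : ∫ x, f x ∂μ = 0 := by
  have h := integral_neg_eq_self f μ
  simp only [hf _, integral_neg] at h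
  linear_combination (norm := module) (-(2 : ℝ)⁻¹) • h

namespace ProbabilityTheory

variable {μ : Measure ℝ}

lemma cdf_neg_eq_one_sub (hc : Continuous (cdf μ))
    (hsym : ∀ x, 0 < x → cdf μ (-x) = 1 - cdf μ x) (x : ℝ) : cdf μ (-x) = 1 - cdf μ x := by
  rcases lt_or_ge x 0 with hx | hx
  · have h := hsym (-x) (neg_pos.mpr hx)
    rw [neg_neg] at h
    linarith
  · have hclosed : IsClosed {x | cdf μ (-x) = 1 - cdf μ x} :=
      isClosed_eq (hc.comp continuous_neg) (continuous_const.sub hc)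
    exact hclosed.closure_subset_iff.mpr (fun y hy => hsym y hy) (closure_Ioi (0 : ℝ) ▸ hx)

variable [IsProbabilityMeasure μ]

lemma measure_cdf_preimage_Iic (hc : Continuous (cdf μ)) {u : ℝ} (hu0 : 0 ≤ u) (hu1 : u < 1) :
    μ (cdf μ ⁻¹' Iic u) = ENNReal.ofReal u := by
  by_cases hne : ∃ x₀, cdf μ x₀ ≤ u
  · obtain ⟨x₀, hx₀⟩ := hne
    obtain ⟨x₁, hx₁⟩ := ((tendsto_cdf_atTop μ).eventually (eventually_gt_nhds hu1)).exists
    obtain ⟨a, hFa, hpre⟩ := (monotone_cdf μ).exists_preimage_Iic_eq_Iic hc hx₀ hx₁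
    rw [hpre, ← ofReal_cdf, hFa]
  · push Not at hne
    have hu : u = 0 := by
      refine le_antisymm (not_lt.mp fun hu => ?_) hu0
      obtain ⟨x, hx⟩ := ((tendsto_cdf_atBot μ).eventually (eventually_lt_nhds hu)).exists
      exact (hne x).not_gt hx
    rw [eq_empty_of_forall_notMem (s := cdf μ ⁻¹' Iic u) fun x hx => (hne x).not_ge hx,
      measure_empty, hu, ENNReal.ofReal_zero]

theorem map_cdf_eq_volume_restrict (hc : Continuous (cdf μ)) :
    μ.map (cdf μ) = volume.restrict (Ioo 0 1) := by
  have : IsProbabilityMeasure (μ.map (cdf μ)) := Measure.isProbabilityMeasure_map hc.aemeasurable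
  refine Measure.ext_of_Iic _ _ fun u => ?_
  rw [Measure.map_apply hc.measurable measurableSet_Iic, Measure.restrict_apply measurableSet_Iic]
  rcases lt_or_ge u 0 with hu0 | hu0
  · have hr : Iic u ∩ Ioo 0 1 = ∅ := by
      ext x; simp only [mem_inter_iff, mem_Iic, mem_Ioo, mem_empty_iff_false, iff_false]; grind
    rw [eq_empty_of_forall_notMem (s := cdf μ ⁻¹' Iic u)
      fun x hx => (hu0.trans_le (cdf_nonneg μ x)).not_ge hx, hr, measure_empty, measure_empty]
  rcases lt_or_ge u 1 with hu1 | hu1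
  · have hr : Iic u ∩ Ioo 0 1 = Ioc 0 u := by
      ext x; simp only [mem_inter_iff, mem_Iic, mem_Ioo, mem_Ioc]; grind
    rw [measure_cdf_preimage_Iic hc hu0 hu1, hr, Real.volume_Ioc, sub_zero]
  · rw [eq_univ_of_forall (s := cdf μ ⁻¹' Iic u) fun x => (cdf_le_one μ x).trans hu1,
      measure_univ, inter_eq_right.mpr fun x hx => hx.2.le.trans hu1, Real.volume_Ioo, sub_zero,
      ENNReal.ofReal_one]

lemma nullSingletonClass_of_continuous_cdf (hc : Continuous (cdf μ)) : NullSingletonClass μ := by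
  refine ⟨fun x => ?_⟩
  have h := (cdf μ).measure_singleton x
  rwa [measure_cdf, hc.continuousWithinAt.leftLim_eq, sub_self, ENNReal.ofReal_zero] at h

lemma measure_Icc_of_continuous_cdf (hc : Continuous (cdf μ)) (a b : ℝ) :
    μ (Icc a b) = ENNReal.ofReal (cdf μ b - cdf μ a) := by
  have h := (cdf μ).measure_Icc a b
  rwa [measure_cdf, hc.continuousWithinAt.leftLim_eq] at h

lemma measure_Ici_of_continuous_cdf (hc : Continuous (cdf μ)) (a : ℝ) :
    μ (Ici a) = ENNReal.ofReal (1 - cdf μ a) := by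
  have h := (cdf μ).measure_Ici (tendsto_cdf_atTop μ) a
  rwa [measure_cdf, hc.continuousWithinAt.leftLim_eq] at h

section Symmetric

variable (hc : Continuous (cdf μ)) (hsymm : ∀ x, cdf μ (-x) = 1 - cdf μ x)
include hc hsymm

lemma isNegInvariant_of_cdf_neg : μ.IsNegInvariant := by
  have : IsProbabilityMeasure μ.neg := Measure.isProbabilityMeasure_map measurable_neg.aemeasurable
  refine ⟨Measure.ext_of_Iic _ _ fun a => ?_⟩
  rw [Measure.neg_apply, neg_Iic, measure_Ici_of_continuous_cdf hc, ← ofReal_cdf, hsymm,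
    sub_sub_cancel]

lemma cdf_map_abs (t : ℝ) : cdf (μ.map (|·|)) t = max (2 * cdf μ t - 1) 0 := by
  have : IsProbabilityMeasure (μ.map (|·|)) :=
    Measure.isProbabilityMeasure_map measurable_abs.aemeasurable
  have hpre : (fun x : ℝ => |x|) ⁻¹' Iic t = Icc (-t) t := by
    ext x; exact abs_le (G := ℝ)
  rw [← ENNReal.toReal_ofReal (cdf_nonneg (μ.map (|·|)) t), ofReal_cdf,
    Measure.map_apply measurable_abs measurableSet_Iic, hpre, measure_Icc_of_continuous_cdf hc,
    hsymm, ENNReal.toReal_ofReal']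
  ring_nf

theorem map_two_mul_cdf_abs_sub_one :
    μ.map (fun x => 2 * cdf μ |x| - 1) = volume.restrict (Ioo 0 1) := by
  have hcdf_abs : cdf (μ.map (|·|)) = fun t => max (2 * cdf μ t - 1) 0 :=
    funext (cdf_map_abs hc hsymm)
  have hcomp : (fun x => 2 * cdf μ |x| - 1) = cdf (μ.map (|·|)) ∘ (|·|) := by
    ext x
    have hmono : cdf μ 0 ≤ cdf μ |x| := monotone_cdf μ (abs_nonneg x)
    have h0 := hsymm 0
    rw [neg_zero] at h0
    rw [Function.comp_apply, cdf_map_abs hc hsymm, max_eq_left (by linarith)]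
  have : IsProbabilityMeasure (μ.map (|·|)) :=
    Measure.isProbabilityMeasure_map measurable_abs.aemeasurable
  have hc_abs : Continuous (cdf (μ.map (|·|))) := by
    rw [hcdf_abs]; fun_prop
  rw [hcomp, ← Measure.map_map hc_abs.measurable measurable_abs,
    map_cdf_eq_volume_restrict hc_abs]

theorem integral_sign_sq_mul_comp {H : ℝ → ℝ}
    (hH : AEStronglyMeasurable H (volume.restrict (Ioo 0 1))) :
    ∫ x, Real.sign x ^ 2 * H (2 * cdf μ |x| - 1) ∂μ = ∫ s in Ioo 0 1, H s := by
  have := nullSingletonClass_of_continuous_cdf hc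
  have hsign : ∀ᵐ x ∂μ, Real.sign x ^ 2 = 1 := by
    filter_upwards [measure_eq_zero_iff_ae_notMem.mp (measure_singleton (μ := μ) 0)] with x hx
    rcases Real.sign_apply_eq_of_ne_zero x hx with h | h <;> simp [h]
  have hmap := map_two_mul_cdf_abs_sub_one hc hsymm
  have hφ : Measurable fun x => 2 * cdf μ |x| - 1 := by fun_prop
  have hae : (fun x => Real.sign x ^ 2 * H (2 * cdf μ |x| - 1)) =ᵐ[μ]
      fun x => H (2 * cdf μ |x| - 1) := hsign.mono fun x hx => by simp only [hx, one_mul]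
  rw [integral_congr_ae hae, ← integral_map hφ.aemeasurable (hmap ▸ hH), hmap]

end Symmetric

end ProbabilityTheory

/-- invariance identities for signed-rank tangents and influence curves.
For a continuous symmetric `P` on `ℝ`, the functions `κ_P(x) = sign(x)·ρ(2F(|x|)-1)`
and `g(x) = sign(x)·q(2F(|x|)-1)` satisfy `∫ g dP = 0`,
`∫ κ_P·g dP = ∫₀¹ ρ·q`, and `∫ (κ_P - g)² dP = ∫₀¹ (ρ - q)²`. -/
theorem stmt_19 (P : Measure ℝ) [IsProbabilityMeasure P]
    (F : ℝ → ℝ) (hF : F = fun x => (P (Set.Iic x)).toReal)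
    (hF_cont : Continuous F)
    (hF_sym : ∀ x : ℝ, 0 < x → F (-x) = 1 - F x)
    (ρ q : ℝ → ℝ)
    (hρ : MemLp ρ 2 (volume.restrict (Set.Ioo (0 : ℝ) 1)))
    (hq : MemLp q 2 (volume.restrict (Set.Ioo (0 : ℝ) 1)))
    (κP g : ℝ → ℝ)
    (hκP : κP = fun x => Real.sign x * ρ (2 * F |x| - 1))
    (hg : g = fun x => Real.sign x * q (2 * F |x| - 1)) :
    ∫ x, g x ∂P = 0 ∧
    ∫ x, κP x * g x ∂P = ∫ s in Set.Ioo (0 : ℝ) 1, ρ s * q s ∧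
    ∫ x, (κP x - g x) ^ 2 ∂P = ∫ s in Set.Ioo (0 : ℝ) 1, (ρ s - q s) ^ 2 ∧
    Real.sqrt (∫ x, (κP x - g x) ^ 2 ∂P) =
      Real.sqrt (∫ s in Set.Ioo (0 : ℝ) 1, (ρ s - q s) ^ 2) := by
  obtain rfl : F = cdf P := by ext x; simp [hF, cdf_eq_real, measureReal_def]
  subst hκP hg
  have hsymm := cdf_neg_eq_one_sub hF_cont hF_sym
  have := isNegInvariant_of_cdf_neg hF_cont hsymm
  have hg_odd : Function.Odd fun x => Real.sign x * q (2 * cdf P |x| - 1) := fun x => by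
    simp only [Real.sign_neg, abs_neg, neg_mul]
  have hprod : ∫ x, Real.sign x * ρ (2 * cdf P |x| - 1) * (Real.sign x * q (2 * cdf P |x| - 1))
      ∂P = ∫ s in Ioo 0 1, ρ s * q s := by
    simp_rw [mul_mul_mul_comm, ← sq]
    exact integral_sign_sq_mul_comp hF_cont hsymm (hρ.1.mul hq.1)
  have hdist :
      ∫ x, (Real.sign x * ρ (2 * cdf P |x| - 1) - Real.sign x * q (2 * cdf P |x| - 1)) ^ 2 ∂P
        = ∫ s in Ioo 0 1, (ρ s - q s) ^ 2 := by
    simp_rw [← mul_sub, mul_pow]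
    exact integral_sign_sq_mul_comp hF_cont hsymm ((hρ.1.sub hq.1).pow 2)
  exact ⟨integral_eq_zero_of_odd P hg_odd, hprod, hdist, by rw [hdist]⟩
end
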